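/- arXiv:2604.14627 — 6 statements merged into one kernel-verified Lean document; each statement's English description precedes it below -/
import Mathlib

section
/- Let U be a finite set, let 𝒰 be a finite family of subsets of U, and let u be an element of U. Then the collection of exact covers of U by 𝒰 is the union, over all R ∈ 𝒰 with u ∈ R, of the collections {S : S is an exact cover of U by 𝒰 and R ∈ S}; moreover, for distinct R, R' ∈ 𝒰 with u ∈ R and u ∈ R', the two collections are disjoint (no exact cover contains both R and R'). -/
/-- `S` is an exact cover of `U` by the family `𝒰`: `S ⊆ 𝒰`, the members of `S` are
pairwise disjoint, and their union is `U`. -/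
def IsExactCover {α : Type*} [DecidableEq α] (U : Finset α) (𝒰 : Finset (Finset α))
    (S : Finset (Finset α)) : Prop :=
  S ⊆ 𝒰 ∧ (S : Set (Finset α)).Pairwise Disjoint ∧ S.sup id = U

namespace IsExactCover

variable {α : Type*} [DecidableEq α] {U : Finset α} {𝒰 S : Finset (Finset α)} {u : α}

theorem exists_mem_of_mem (hS : IsExactCover U 𝒰 S) (hu : u ∈ U) : ∃ R ∈ S, u ∈ R := by
  obtain ⟨_, _, hsup⟩ := hS
  exact Finset.mem_sup.mp (hsup ▸ hu)

theorem eq_of_mem_of_mem (hS : IsExactCover U 𝒰 S) {R R' : Finset α} (hR : R ∈ S)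
    (hR' : R' ∈ S) (huR : u ∈ R) (huR' : u ∈ R') : R = R' := by
  by_contra hne
  exact Finset.disjoint_left.mp (hS.2.1 hR hR' hne) huR huR'

end IsExactCover

theorem exactCovers_eq_biUnion_and_pairwise_disjoint
    {α : Type*} [DecidableEq α] (U : Finset α) (𝒰 : Finset (Finset α))
    (u : α) (hu : u ∈ U) :
    ({S | IsExactCover U 𝒰 S} =
        ⋃ R ∈ 𝒰.filter (fun R => u ∈ R), {S | IsExactCover U 𝒰 S ∧ R ∈ S}) ∧
    (∀ R R' : Finset α, R ∈ 𝒰 → R' ∈ 𝒰 → u ∈ R → u ∈ R' → R ≠ R' →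
        ∀ S, ¬(IsExactCover U 𝒰 S ∧ R ∈ S ∧ R' ∈ S)) := by
  constructor
  · ext S
    simp only [Set.mem_iUnion, Set.mem_ofPred_eq, Finset.mem_filter, exists_prop]
    refine ⟨fun hS => ?_, fun ⟨_, _, hS, _⟩ => hS⟩
    obtain ⟨R, hRS, huR⟩ := hS.exists_mem_of_mem hu
    exact ⟨R, ⟨hS.1 hRS, huR⟩, hS, hRS⟩
  · rintro R R' - - huR huR' hne S ⟨hS, hR, hR'⟩
    exact hne (hS.eq_of_mem_of_mem hR hR' huR huR')
end

section
/- Let U be a finite set partitioned into pairwise disjoint subsets U₁, …, Uₙ with U = U₁ ∪ ⋯ ∪ Uₙ, and let 𝒰 be a finite family of subsets of U partitioned into pairwise disjoint subfamilies 𝒰₁, …, 𝒰ₙ with 𝒰 = 𝒰₁ ∪ ⋯ ∪ 𝒰ₙ, such that every A ∈ 𝒰ᵢ satisfies A ⊆ Uᵢ. Then a subfamily S ⊆ 𝒰 is an exact cover of U by 𝒰 if and only if, for every i with 1 ≤ i ≤ n, the subfamily S ∩ 𝒰ᵢ is an exact cover of Uᵢ by 𝒰ᵢ. -/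
/-! Since `S ⊆ 𝒰`, `S` is the union of the pieces `S ∩ 𝒰ᵢ`, and the members of the piece
`S ∩ 𝒰ᵢ` all lie in `Uᵢ`. As the `Uᵢ` are pairwise disjoint, members from different pieces are
disjoint, and `⋃ S` meets `Uᵢ` exactly in `⋃ (S ∩ 𝒰ᵢ)`; so both disjointness and covering
can be checked piece by piece. -/

open Finset Function

section Components

variable {α ι : Type*} [DecidableEq α]
  {Upart : ι → Finset α} {Fpart : ι → Finset (Finset α)} {S : Finset (Finset α)}

lemma eq_biUnion_inter_of_subset_sup [Fintype ι] (hS : S ⊆ univ.sup Fpart) :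
    S = univ.biUnion fun i => S ∩ Fpart i := by
  rw [← inter_biUnion, ← sup_eq_biUnion, inter_eq_left.2 hS]

lemma sup_id_eq_sup_sup_inter [Fintype ι] (hS : S ⊆ univ.sup Fpart) :
    S.sup id = univ.sup fun i => (S ∩ Fpart i).sup id := by
  conv_lhs => rw [eq_biUnion_inter_of_subset_sup hS]
  exact sup_biUnion _ _

lemma sup_id_inter_le (hsub : ∀ i, ∀ A ∈ Fpart i, A ⊆ Upart i) (i : ι) :
    (S ∩ Fpart i).sup id ≤ Upart i :=
  Finset.sup_le fun A hA => hsub i A (mem_inter.1 hA).2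

lemma sup_id_inter_eq_sup_id_inter [Fintype ι] (hsub : ∀ i, ∀ A ∈ Fpart i, A ⊆ Upart i)
    (hUdisj : Pairwise (Disjoint on Upart)) (hS : S ⊆ univ.sup Fpart) (i : ι) :
    (S ∩ Fpart i).sup id = S.sup id ∩ Upart i := by
  refine le_antisymm (le_inf (sup_mono inter_subset_left) (sup_id_inter_le hsub i)) ?_
  rw [sup_id_eq_sup_sup_inter hS, ← inf_eq_inter, sup_inf_distrib_right]
  refine Finset.sup_le fun j _ => ?_
  obtain rfl | hji := eq_or_ne j i
  · exact inf_le_left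
  · rw [((hUdisj hji).mono_left (sup_id_inter_le hsub j)).eq_bot]
    exact bot_le

lemma pairwise_disjoint_of_forall_pairwise_disjoint_inter [Fintype ι]
    (hsub : ∀ i, ∀ A ∈ Fpart i, A ⊆ Upart i) (hUdisj : Pairwise (Disjoint on Upart))
    (hS : S ⊆ univ.sup Fpart)
    (h : ∀ i, (↑(S ∩ Fpart i) : Set (Finset α)).Pairwise Disjoint) :
    (S : Set (Finset α)).Pairwise Disjoint := by
  rw [eq_biUnion_inter_of_subset_sup hS, coe_biUnion]
  refine Set.PairwiseDisjoint.biUnion_finset (f := id) ?_ fun i _ => h i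
  exact fun i _ j _ hij =>
    (hUdisj hij).mono (sup_id_inter_le hsub i) (sup_id_inter_le hsub j)

end Components

theorem isExactCover_iff_forall_component_general
    {α : Type*} [DecidableEq α] (n : ℕ)
    (U : Finset α) (𝒰 : Finset (Finset α))
    (Upart : Fin n → Finset α) (Fpart : Fin n → Finset (Finset α))
    (hUdisj : ∀ i j, i ≠ j → Disjoint (Upart i) (Upart j))
    (hU : U = Finset.univ.sup Upart)
    (hF : 𝒰 = Finset.univ.sup Fpart)
    (hsub : ∀ i, ∀ A ∈ Fpart i, A ⊆ Upart i)
    (S : Finset (Finset α)) (hS : S ⊆ 𝒰) :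
    IsExactCover U 𝒰 S ↔ ∀ i, IsExactCover (Upart i) (Fpart i) (S ∩ Fpart i) := by
  have hUdisj' : Pairwise (Disjoint on Upart) := fun i j => hUdisj i j
  have hSF : S ⊆ univ.sup Fpart := hF ▸ hS
  constructor
  · rintro ⟨-, hdisj, hsup⟩ i
    refine ⟨inter_subset_right, hdisj.mono (coe_subset.2 inter_subset_left), ?_⟩
    rw [sup_id_inter_eq_sup_id_inter hsub hUdisj' hSF, hsup, hU,
      inter_eq_right.2 (le_sup (f := Upart) (mem_univ i))]
  · intro h
    refine ⟨hS, pairwise_disjoint_of_forall_pairwise_disjoint_inter hsub hUdisj' hSF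
      fun i => (h i).2.1, ?_⟩
    rw [sup_id_eq_sup_sup_inter hSF, hU]
    exact sup_congr rfl fun i _ => (h i).2.2

theorem isExactCover_iff_forall_component
    {α : Type*} [DecidableEq α] (n : ℕ)
    (U : Finset α) (𝒰 : Finset (Finset α))
    (Upart : Fin n → Finset α) (Fpart : Fin n → Finset (Finset α))
    (hUdisj : ∀ i j, i ≠ j → Disjoint (Upart i) (Upart j))
    (hU : U = Finset.univ.sup Upart)
    (hFdisj : ∀ i j, i ≠ j → Disjoint (Fpart i) (Fpart j))
    (hF : 𝒰 = Finset.univ.sup Fpart)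
    (hsub : ∀ i, ∀ A ∈ Fpart i, A ⊆ Upart i)
    (S : Finset (Finset α)) (hS : S ⊆ 𝒰) :
    IsExactCover U 𝒰 S ↔ ∀ i, IsExactCover (Upart i) (Fpart i) (S ∩ Fpart i) :=
  isExactCover_iff_forall_component_general n U 𝒰 Upart Fpart hUdisj hU hF hsub S hS
end

section
/- Let U be a finite set partitioned into pairwise disjoint subsets U₁, …, Uₙ with U = U₁ ∪ ⋯ ∪ Uₙ, and let 𝒰 be a finite family of subsets of U partitioned into pairwise disjoint subfamilies 𝒰₁, …, 𝒰ₙ with 𝒰 = 𝒰₁ ∪ ⋯ ∪ 𝒰ₙ, such that every A ∈ 𝒰ᵢ satisfies A ⊆ Uᵢ. Then the number of exact covers of U by 𝒰 equals the product, over i from 1 to n, of the number of exact covers of Uᵢ by 𝒰ᵢ. -/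
/-! Restricting an exact cover `S` of `⋃ Uᵢ` to the subfamily `𝒰ᵢ` gives an exact cover of `Uᵢ`,
because a member of `𝒰ⱼ` lies in `Uⱼ`, which misses `Uᵢ` for `j ≠ i`. Conversely the union of
exact covers of the `Uᵢ` is an exact cover of `⋃ Uᵢ`, and since the `𝒰ᵢ` are pairwise disjoint the
two constructions are mutually inverse. -/

open Finset Function

section

variable {α ι : Type*} [DecidableEq α] [Fintype ι] {Upart : ι → Finset α}
  {Fpart : ι → Finset (Finset α)}

theorem Finset.sup_inter_eq_self_of_subset_sup {F : ι → Finset α} {S : Finset α}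
    (hS : S ⊆ univ.sup F) : univ.sup (fun i => S ∩ F i) = S := by
  change univ.sup (fun i => S ⊓ F i) = S
  rw [← sup_inf_distrib_left]
  exact inf_eq_left.mpr hS

theorem Finset.sup_inter_eq_of_pairwise_disjoint {F f : ι → Finset α}
    (hF : Pairwise (Disjoint on F)) (hf : ∀ i, f i ⊆ F i) (i : ι) : univ.sup f ∩ F i = f i := by
  ext b
  simp only [mem_inter, mem_sup, mem_univ, true_and]
  refine ⟨fun ⟨⟨j, hj⟩, hi⟩ => ?_, fun hb => ⟨⟨i, hb⟩, hf i hb⟩⟩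
  obtain rfl : j = i := by
    by_contra hne
    exact disjoint_left.mp (hF hne) (hf j hj) hi
  exact hj

namespace IsExactCover

theorem subset_of_mem {U : Finset α} {𝒰 S : Finset (Finset α)} (hS : IsExactCover U 𝒰 S)
    {A : Finset α} (hA : A ∈ S) : A ⊆ U :=
  hS.2.2 ▸ le_sup (f := id) hA

theorem inter {S : Finset (Finset α)}
    (hS : IsExactCover (univ.sup Upart) (univ.sup Fpart) S) (hUdisj : Pairwise (Disjoint on Upart))
    (hsub : ∀ i, ∀ A ∈ Fpart i, A ⊆ Upart i) (i : ι) :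
    IsExactCover (Upart i) (Fpart i) (S ∩ Fpart i) := by
  obtain ⟨hS𝒰, hSdisj, hSU⟩ := hS
  refine ⟨inter_subset_right, hSdisj.mono (by simp), le_antisymm ?_ fun x hx => ?_⟩
  · exact Finset.sup_le fun A hA => hsub i A (mem_inter.mp hA).2
  have hxU : x ∈ S.sup id := hSU ▸ mem_sup.mpr ⟨i, mem_univ i, hx⟩
  obtain ⟨A, hAS, hxA⟩ := mem_sup.mp hxU
  obtain ⟨j, -, hAj⟩ := mem_sup.mp (hS𝒰 hAS)
  obtain rfl : j = i := by
    by_contra hne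
    exact disjoint_left.mp (hUdisj hne) (hsub j A hAj hxA) hx
  exact mem_sup.mpr ⟨A, mem_inter.mpr ⟨hAS, hAj⟩, hxA⟩

theorem sup {f : ι → Finset (Finset α)} (hf : ∀ i, IsExactCover (Upart i) (Fpart i) (f i))
    (hUdisj : Pairwise (Disjoint on Upart)) :
    IsExactCover (univ.sup Upart) (univ.sup Fpart) (univ.sup f) := by
  refine ⟨sup_mono_fun fun i _ => (hf i).1, fun A hA B hB hAB => ?_, ?_⟩
  · obtain ⟨i, -, hAi⟩ := mem_sup.mp hA
    obtain ⟨j, -, hBj⟩ := mem_sup.mp hB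
    rcases eq_or_ne i j with rfl | hij
    · exact (hf i).2.1 hAi hBj hAB
    · exact (hUdisj hij).mono ((hf i).subset_of_mem hAi) ((hf j).subset_of_mem hBj)
  · rw [sup_eq_biUnion univ f, sup_biUnion]
    exact sup_congr rfl fun i _ => (hf i).2.2

end IsExactCover

def exactCoversEquivPi (hUdisj : Pairwise (Disjoint on Upart))
    (hFdisj : Pairwise (Disjoint on Fpart)) (hsub : ∀ i, ∀ A ∈ Fpart i, A ⊆ Upart i) :
    {S // IsExactCover (univ.sup Upart) (univ.sup Fpart) S} ≃
      ∀ i, {S // IsExactCover (Upart i) (Fpart i) S} where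
  toFun S i := ⟨S.1 ∩ Fpart i, S.2.inter hUdisj hsub i⟩
  invFun f := ⟨univ.sup fun i => (f i).1, IsExactCover.sup (fun i => (f i).2) hUdisj⟩
  left_inv S := Subtype.ext (sup_inter_eq_self_of_subset_sup S.2.1)
  right_inv f := funext fun i =>
    Subtype.ext (sup_inter_eq_of_pairwise_disjoint hFdisj (fun j => (f j).2.1) i)

end

theorem ncard_exactCovers_eq_prod
    {α : Type*} [DecidableEq α] (n : ℕ)
    (U : Finset α) (𝒰 : Finset (Finset α))
    (Upart : Fin n → Finset α) (Fpart : Fin n → Finset (Finset α))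
    (hUdisj : ∀ i j, i ≠ j → Disjoint (Upart i) (Upart j))
    (hU : U = Finset.univ.sup Upart)
    (hFdisj : ∀ i j, i ≠ j → Disjoint (Fpart i) (Fpart j))
    (hF : 𝒰 = Finset.univ.sup Fpart)
    (hsub : ∀ i, ∀ A ∈ Fpart i, A ⊆ Upart i) :
    {S | IsExactCover U 𝒰 S}.ncard =
      ∏ i, {S | IsExactCover (Upart i) (Fpart i) S}.ncard := by
  subst hU hF
  exact (Nat.card_congr
    (exactCoversEquivPi (fun i j => hUdisj i j) (fun i j => hFdisj i j) hsub)).trans Nat.card_pi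
end

section
/- Let G be a connected simple graph on a finite vertex set, let T be a spanning tree of G (a subgraph T ≤ G on the same vertex set that is connected and acyclic), and let e = {u, v} be an edge of T. Let T' and G' denote T and G with the edge e deleted, respectively. Then G' is connected if and only if there exists an edge {x, y} of G with {x, y} ≠ {u, v} such that x is reachable from u in T' and y is reachable from v in T'. -/
theorem deleteTreeEdge_connected_iff_replacement_edge
    {V : Type*} [Fintype V] (G T : SimpleGraph V)
    (hG : G.Connected) (hTG : T ≤ G) (hTconn : T.Connected) (hTacyc : T.IsAcyclic)
    (u v : V) (he : T.Adj u v) :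
    (G.deleteEdges {s(u, v)}).Connected ↔
      ∃ x y : V, G.Adj x y ∧ s(x, y) ≠ s(u, v) ∧
        (T.deleteEdges {s(u, v)}).Reachable u x ∧
        (T.deleteEdges {s(u, v)}).Reachable v y := by
  set T' := T.deleteEdges {s(u, v)} with hT'def
  set G' := G.deleteEdges {s(u, v)} with hG'def
  -- the edge uv is a bridge of T
  have hbridge : ¬ T'.Reachable u v := by
    have hb := (SimpleGraph.isAcyclic_iff_forall_adj_isBridge.mp hTacyc) he
    rw [SimpleGraph.isBridge_iff] at hb
    exact hb
  -- every vertex is reachable from u or from v in T'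
  have hcover : ∀ w, T'.Reachable u w ∨ T'.Reachable v w := by
    have key : ∀ {a b : V}, T.Walk a b →
        (T'.Reachable u a ∨ T'.Reachable v a) →
        (T'.Reachable u b ∨ T'.Reachable v b) := by
      intro a b W
      induction W with
      | nil => exact id
      | @cons a c b h p ih =>
        intro ha
        apply ih
        by_cases hs : s(a, c) = s(u, v)
        · rcases Sym2.eq_iff.mp hs with ⟨-, rfl⟩ | ⟨-, rfl⟩
          · exact Or.inr (SimpleGraph.Reachable.refl _)
          · exact Or.inl (SimpleGraph.Reachable.refl _)
        · have h' : T'.Adj a c := SimpleGraph.deleteEdges_adj.mpr ⟨h, by simpa using hs⟩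
          exact ha.imp (fun hr => hr.trans h'.reachable) (fun hr => hr.trans h'.reachable)
    intro w
    obtain ⟨W⟩ := hTconn.preconnected u w
    exact key W (Or.inl (SimpleGraph.Reachable.refl _))
  have hle : T' ≤ G' := by
    intro a b hab
    rw [SimpleGraph.deleteEdges_adj] at hab ⊢
    exact ⟨hTG hab.1, hab.2⟩
  constructor
  · intro hconn
    obtain ⟨W⟩ := hconn.preconnected u v
    have hcross : ∀ {a b : V}, G'.Walk a b → T'.Reachable u a → ¬ T'.Reachable u b →
        ∃ x y, G'.Adj x y ∧ T'.Reachable u x ∧ ¬ T'.Reachable u y := by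
      intro a b W
      induction W with
      | nil => exact fun h h' => absurd h h'
      | @cons a c b h p ih =>
        intro ha hb
        by_cases hc : T'.Reachable u c
        · exact ih hc hb
        · exact ⟨a, c, h, ha, hc⟩
    obtain ⟨x, y, hxy, hux, huy⟩ := hcross W (SimpleGraph.Reachable.refl _) hbridge
    rw [SimpleGraph.deleteEdges_adj] at hxy
    refine ⟨x, y, hxy.1, by simpa using hxy.2, hux, ?_⟩
    exact (hcover y).resolve_left huy
  · rintro ⟨x, y, hxy, hne, hux, hvy⟩
    have hxy' : G'.Adj x y := SimpleGraph.deleteEdges_adj.mpr ⟨hxy, by simpa using hne⟩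
    have huv' : G'.Reachable u v :=
      ((hux.mono hle).trans hxy'.reachable).trans (hvy.mono hle).symm
    have hu : ∀ w, G'.Reachable u w := by
      intro w
      rcases hcover w with h | h
      · exact h.mono hle
      · exact huv'.trans (h.mono hle)
    have : Nonempty V := ⟨u⟩
    exact ⟨fun a b => (hu a).symm.trans (hu b)⟩
end

section
/- Let G be a connected simple graph on a finite vertex set, let T be a spanning tree of G (a subgraph T ≤ G on the same vertex set that is connected and acyclic), and let e = {u, v} be an edge of T. Let T' and G' denote T and G with the edge e deleted. Suppose {x, y} is an edge of G with {x, y} ≠ {u, v} such that x is reachable from u in T' and y is reachable from v in T'. Then the graph obtained from T' by adding the edge {x, y} is a spanning tree of G'. -/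
private lemma replacementEdge_aux {V : Type*} {T : SimpleGraph V} {u v : V} :
    ∀ {w z : V} (_ : T.Walk w z),
      (T.deleteEdges {s(u, v)}).Reachable w z ∨
      (T.deleteEdges {s(u, v)}).Reachable w u ∨
      (T.deleteEdges {s(u, v)}).Reachable w v := by
  intro w z p
  induction p with
  | nil => exact Or.inl (SimpleGraph.Reachable.refl _)
  | @cons a b c hab q ih =>
    by_cases h : s(a, b) = s(u, v)
    · rw [Sym2.eq_iff] at h
      rcases h with ⟨rfl, rfl⟩ | ⟨rfl, rfl⟩
      · exact Or.inr (Or.inl (SimpleGraph.Reachable.refl _))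
      · exact Or.inr (Or.inr (SimpleGraph.Reachable.refl _))
    · have hT'ab : (T.deleteEdges {s(u, v)}).Adj a b := by
        rw [SimpleGraph.deleteEdges_adj]
        exact ⟨hab, by simpa using h⟩
      rcases ih with h1 | h1 | h1
      · exact Or.inl (hT'ab.reachable.trans h1)
      · exact Or.inr (Or.inl (hT'ab.reachable.trans h1))
      · exact Or.inr (Or.inr (hT'ab.reachable.trans h1))

theorem replacementEdge_spanningTree
    {V : Type*} [Fintype V] (G T : SimpleGraph V)
    (hG : G.Connected) (hTG : T ≤ G) (hTconn : T.Connected) (hTacyc : T.IsAcyclic)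
    (u v : V) (he : T.Adj u v)
    (x y : V) (hxy : G.Adj x y) (hne : s(x, y) ≠ s(u, v))
    (hx : (T.deleteEdges {s(u, v)}).Reachable u x)
    (hy : (T.deleteEdges {s(u, v)}).Reachable v y) :
    (T.deleteEdges {s(u, v)} ⊔ SimpleGraph.fromEdgeSet {s(x, y)}) ≤ G.deleteEdges {s(u, v)} ∧
    (T.deleteEdges {s(u, v)} ⊔ SimpleGraph.fromEdgeSet {s(x, y)}).Connected ∧
    (T.deleteEdges {s(u, v)} ⊔ SimpleGraph.fromEdgeSet {s(x, y)}).IsAcyclic := by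
  classical
  set T' := T.deleteEdges {s(u, v)} with hT'def
  set F := SimpleGraph.fromEdgeSet {s(x, y)} with hFdef
  have hT'T : T' ≤ T := T.deleteEdges_le _
  have hxyne : x ≠ y := hxy.ne
  have hmonoAcyc : ∀ {A B : SimpleGraph V}, A ≤ B → B.IsAcyclic → A.IsAcyclic := by
    intro A B hAB hB a c hc
    exact hB (c.mapLe hAB) (hc.mapLe hAB)
  -- part 1 : ≤
  have hF : F ≤ G.deleteEdges {s(u, v)} := by
    intro a b hab
    rw [hFdef, SimpleGraph.fromEdgeSet_adj, Set.mem_singleton_iff] at hab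
    obtain ⟨hab1, hab2⟩ := hab
    rw [SimpleGraph.deleteEdges_adj]
    constructor
    · rw [← SimpleGraph.mem_edgeSet, hab1, SimpleGraph.mem_edgeSet]
      exact hxy
    · rw [Set.mem_singleton_iff, hab1]
      exact hne
  have hle : T' ⊔ F ≤ G.deleteEdges {s(u, v)} :=
    sup_le (SimpleGraph.deleteEdges_mono hTG) hF
  -- key : every vertex reaches u or v in T'
  have key : ∀ w : V, T'.Reachable w u ∨ T'.Reachable w v := by
    intro w
    obtain ⟨p⟩ := hTconn.preconnected w u
    rcases replacementEdge_aux (u := u) (v := v) p with h | h | h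
    · exact Or.inl h
    · exact Or.inl h
    · exact Or.inr h
  -- connectivity
  have hFadj : F.Adj x y := by
    rw [hFdef, SimpleGraph.fromEdgeSet_adj]
    exact ⟨rfl, hxyne⟩
  have hconn : (T' ⊔ F).Connected := by
    rw [SimpleGraph.connected_iff]
    refine ⟨?_, hG.nonempty⟩
    have hux : (T' ⊔ F).Reachable u x := hx.mono le_sup_left
    have hvx : (T' ⊔ F).Reachable v x :=
      (hy.mono le_sup_left).trans ((hFadj.symm.reachable).mono le_sup_right)
    have hreach : ∀ w : V, (T' ⊔ F).Reachable w x := by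
      intro w
      rcases key w with h | h
      · exact (h.mono le_sup_left).trans hux
      · exact (h.mono le_sup_left).trans hvx
    exact fun a b => (hreach a).trans (hreach b).symm
  refine ⟨hle, hconn, ?_⟩
  -- acyclicity
  by_cases hA : T'.Adj x y
  · have hFT' : F ≤ T' := by
      intro a b hab
      rw [hFdef, SimpleGraph.fromEdgeSet_adj, Set.mem_singleton_iff, Sym2.eq_iff] at hab
      rcases hab.1 with ⟨h1, h2⟩ | ⟨h1, h2⟩
      · rw [h1, h2]; exact hA
      · rw [h1, h2]; exact hA.symm
    rw [sup_eq_left.mpr hFT']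
    exact hmonoAcyc hT'T hTacyc
  · have hbridge : ¬ T'.Reachable u v := by
      have := (SimpleGraph.isAcyclic_iff_forall_adj_isBridge.mp hTacyc) he
      rw [SimpleGraph.isBridge_iff] at this
      exact this
    have hxyT' : ¬ T'.Reachable x y := fun h =>
      hbridge ((hx.trans h).trans hy.symm)
    have hHbridge : (T' ⊔ F).IsBridge s(x, y) := by
      rw [SimpleGraph.isBridge_iff]
      intro h
      apply hxyT'
      refine h.mono ?_
      intro a b hab
      obtain ⟨hab1, hab2⟩ := hab
      rcases hab1 with h1 | h1
      · exact h1
      · exfalso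
        rw [hFdef, SimpleGraph.fromEdgeSet_adj] at h1
        exact hab2 (by rw [SimpleGraph.fromEdgeSet_adj]; exact h1)
    rw [SimpleGraph.isBridge_iff_forall_cycle_notMem ((SimpleGraph.sup_adj T' F x y).mpr (Or.inr hFadj))] at hHbridge
    intro a c hc
    have hnotmem := hHbridge c hc
    have hsub : ∀ e ∈ c.edges, e ∈ T.edgeSet := by
      intro e he'
      have hce := c.edges_subset_edgeSet he'
      rw [SimpleGraph.edgeSet_sup] at hce
      rcases hce with h1 | h1
      · exact SimpleGraph.edgeSet_mono hT'T h1
      · exfalso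
        rw [hFdef, SimpleGraph.edgeSet_fromEdgeSet] at h1
        have : e = s(x, y) := h1.1
        exact hnotmem (this ▸ he')
    exact hTacyc (c.transfer T hsub) (hc.transfer hsub)
end

section
/- Let G be a connected simple graph on a finite vertex set, let T be a spanning tree of G (a subgraph T ≤ G on the same vertex set that is connected and acyclic), and let e = {u, v} be an edge of T. Let T' and G' denote T and G with the edge e deleted. Suppose that every edge {x, y} of G with {x, y} ≠ {u, v} has both endpoints reachable from u in T' or both endpoints reachable from v in T'. Then for every vertex w, w is reachable from u in G' if and only if w is reachable from u in T', and w is reachable from v in G' if and only if w is reachable from v in T'; in particular, the connected components of G' have vertex sets equal to the vertex sets of the two components of T'. -/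
theorem split_components_of_no_replacement_edge
    {V : Type*} [Fintype V] (G T : SimpleGraph V)
    (hG : G.Connected) (hTG : T ≤ G) (hTconn : T.Connected) (hTacyc : T.IsAcyclic)
    (u v : V) (he : T.Adj u v)
    (hno : ∀ x y : V, G.Adj x y → s(x, y) ≠ s(u, v) →
        ((T.deleteEdges {s(u, v)}).Reachable u x ∧ (T.deleteEdges {s(u, v)}).Reachable u y) ∨
        ((T.deleteEdges {s(u, v)}).Reachable v x ∧ (T.deleteEdges {s(u, v)}).Reachable v y)) :
    ∀ w : V,
      ((G.deleteEdges {s(u, v)}).Reachable u w ↔ (T.deleteEdges {s(u, v)}).Reachable u w) ∧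
      ((G.deleteEdges {s(u, v)}).Reachable v w ↔ (T.deleteEdges {s(u, v)}).Reachable v w) := by
  set T' := T.deleteEdges {s(u, v)} with hT'
  set G' := G.deleteEdges {s(u, v)} with hG'
  have hle : T' ≤ G' := by
    intro a b hab
    rw [SimpleGraph.deleteEdges_adj] at hab ⊢
    exact ⟨hTG hab.1, hab.2⟩
  -- u and v are not reachable in T'
  have huv : ¬ T'.Reachable u v := by
    have hb : T.IsBridge s(u, v) := (SimpleGraph.isAcyclic_iff_forall_adj_isBridge.mp hTacyc) he
    rw [SimpleGraph.isBridge_iff] at hb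
    exact hb
  -- key step lemma
  have step : ∀ x y : V, G'.Adj x y →
      (T'.Reachable u x → T'.Reachable u y) ∧ (T'.Reachable v x → T'.Reachable v y) := by
    intro x y hxy
    rw [SimpleGraph.deleteEdges_adj] at hxy
    have hne : s(x, y) ≠ s(u, v) := by
      intro h; exact hxy.2 (by simp [h])
    rcases hno x y hxy.1 hne with ⟨h1, h2⟩ | ⟨h1, h2⟩
    · constructor
      · intro _; exact h2
      · intro hvx; exact absurd ((hvx.trans h1.symm).symm) huv
    · constructor
      · intro hux; exact absurd (hux.trans h1.symm) huv
      · intro _; exact h2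
  have walk : ∀ a b : V, G'.Reachable a b →
      (T'.Reachable u a → T'.Reachable u b) ∧ (T'.Reachable v a → T'.Reachable v b) := by
    intro a b ⟨p⟩
    induction p with
    | nil => exact ⟨id, id⟩
    | cons h p ih =>
      exact ⟨fun hu => ih.1 ((step _ _ h).1 hu), fun hv => ih.2 ((step _ _ h).2 hv)⟩
  intro w
  constructor
  · exact ⟨fun h => (walk u w h).1 (SimpleGraph.Reachable.refl u), fun h => h.mono hle⟩
  · exact ⟨fun h => (walk v w h).2 (SimpleGraph.Reachable.refl v), fun h => h.mono hle⟩
end
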